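/- Let (X,d) be an infinite ultrametric space with finite scale d(X,X) = {0, r_1, …, r_n}, 0 < r_1 < … < r_n. The following are equivalent: (i) every free ultrafilter on (X,d) is metrically Ramsey; (ii) for every i ∈ {1,…,n}, the partition 𝒫_i of X into equivalence classes of the relation x ∼ y ⇔ d(x,y) ≤ r_i has only finitely many infinite classes, and there exists m ∈ ω such that |C| < m for each finite class C of 𝒫_i. -/

import Mathlib

/-!
(ii) ⇒ (i): given an ultrafilter `𝒰`, let `r i` be the least radius one of whose classes `C`
lies in `𝒰`. For a smaller radius `r j` no class lies in `𝒰`, so `𝒰` avoids the union of the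
finitely many infinite `r j`-classes; labelling the points of each finite `r j`-class injectively
by fewer than `m` labels, one label set lies in `𝒰`, and its distinct points are more than `r j`
apart. Intersecting these sets with `C` leaves a member of `𝒰` on which every nonzero distance is
`r i`, hence a monochrome one.

(i) ⇒ (ii): if (ii) fails for `R = r i`, the sets meeting all but finitely many `R`-classes in
boundedly many points form a proper ideal. It contains the singletons, the `R`-classes and the
sets meeting every class at most once, so an ultrafilter avoiding it is free and has no monochrome
member for the coloring `dist x y ≤ R`.
-/

/-- A `{0,1}`-coloring of pairs is isometric if it only depends on the distance. -/
def IsIsometricColoring {X : Type*} [MetricSpace X] (χ : X → X → Bool) : Prop :=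
  ∀ x y z t : X, dist x y = dist z t → χ x y = χ z t

/-- `[U]²` is monochrome for the coloring `χ`. -/
def MonochromeOn {X : Type*} (χ : X → X → Bool) (U : Set X) : Prop :=
  ∃ k : Bool, ∀ x ∈ U, ∀ y ∈ U, x ≠ y → χ x y = k

/-- An ultrafilter is free if it is not principal. -/
def IsFreeUltrafilter {X : Type*} (𝒰 : Ultrafilter X) : Prop :=
  ∀ x : X, 𝒰 ≠ pure x

/-- An ultrafilter is metrically Ramsey if every isometric coloring has a
monochrome member. -/
def MetricallyRamsey {X : Type*} [MetricSpace X] (𝒰 : Ultrafilter X) : Prop :=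
  ∀ χ : X → X → Bool, IsIsometricColoring χ → ∃ U ∈ 𝒰, MonochromeOn χ U

/-- The class of `x` under the equivalence `y ∼ z ↔ dist y z ≤ r`. -/
def ballClass {X : Type*} [MetricSpace X] (r : ℝ) (x : X) : Set X :=
  {y : X | dist x y ≤ r}

open Set Filter

section Partition

variable {α : Type*} {c : α → Set α}

def IsTame (c : α → Set α) : Prop :=
  {C : Set α | (∃ x, C = c x) ∧ C.Infinite}.Finite ∧
    ∃ m : ℕ, ∀ C : Set α, (∃ x, C = c x) → C.Finite → C.ncard < m

def IsThin (c : α → Set α) (A : Set α) : Prop :=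
  ∃ 𝒞 : Set (Set α), 𝒞.Finite ∧ ∃ k : ℕ, ∀ x, c x ∉ 𝒞 → (A ∩ c x).encard ≤ k

theorem IsThin.mono {A B : Set α} (hB : IsThin c B) (hAB : A ⊆ B) : IsThin c A := by
  obtain ⟨𝒞, h𝒞, k, hk⟩ := hB
  exact ⟨𝒞, h𝒞, k, fun x hx => (encard_mono (inter_subset_inter_left _ hAB)).trans (hk x hx)⟩

theorem IsThin.union {A B : Set α} (hA : IsThin c A) (hB : IsThin c B) : IsThin c (A ∪ B) := by
  obtain ⟨𝒞, h𝒞, k, hk⟩ := hA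
  obtain ⟨𝒟, h𝒟, l, hl⟩ := hB
  refine ⟨𝒞 ∪ 𝒟, h𝒞.union h𝒟, k + l, fun x hx => ?_⟩
  rw [mem_union, not_or] at hx
  calc ((A ∪ B) ∩ c x).encard = (A ∩ c x ∪ B ∩ c x).encard := by rw [union_inter_distrib_right]
    _ ≤ (A ∩ c x).encard + (B ∩ c x).encard := encard_union_le _ _
    _ ≤ k + l := add_le_add (hk x hx.1) (hl x hx.2)

theorem Set.Finite.isThin {A : Set α} (hA : A.Finite) : IsThin c A :=
  ⟨∅, finite_empty, A.ncard, fun _ _ => hA.cast_ncard_eq ▸ encard_mono inter_subset_left⟩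

theorem isThin_class (hc : ∀ {x y}, y ∈ c x → c y = c x) (x : α) : IsThin c (c x) := by
  refine ⟨{c x}, finite_singleton _, 0, fun y hy => ?_⟩
  rw [Nat.cast_zero, nonpos_iff_eq_zero, encard_eq_zero, eq_empty_iff_forall_notMem]
  rintro z ⟨hzx, hzy⟩
  exact hy ((hc hzy).symm.trans (hc hzx))

theorem isThin_of_transversal (hc : ∀ {x y}, y ∈ c x → c y = c x) {A : Set α}
    (hA : ∀ x ∈ A, ∀ y ∈ A, y ∈ c x → y = x) : IsThin c A := by
  refine ⟨∅, finite_empty, 1, fun z _ => ?_⟩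
  rw [Nat.cast_one, encard_le_one_iff]
  rintro x y ⟨hx, hxz⟩ ⟨hy, hyz⟩
  exact hA y hy x hx (by rwa [hc hyz])

theorem IsThin.isTame_of_univ (h : IsThin c univ) : IsTame c := by
  obtain ⟨𝒞, h𝒞, k, hk⟩ := h
  have hbig : ∀ x, (k : ℕ∞) < (c x).encard → c x ∈ 𝒞 := fun x hx =>
    by_contra fun h => (hk x h).not_gt (by rwa [univ_inter])
  obtain ⟨M, hM⟩ := (h𝒞.image ncard).bddAbove
  refine ⟨h𝒞.subset ?_, max k M + 1, ?_⟩
  · rintro _ ⟨⟨x, rfl⟩, hinf⟩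
    exact hbig x (by simp [hinf.encard_eq])
  · rintro _ ⟨x, rfl⟩ hfin
    rcases le_or_gt (c x).encard k with hle | hlt
    · have : (c x).ncard ≤ k := by rwa [← hfin.cast_ncard_eq, Nat.cast_le] at hle
      omega
    · have := hM (mem_image_of_mem ncard (hbig x hlt))
      omega

def coThin (c : α → Set α) : Filter α :=
  comk (IsThin c) finite_empty.isThin (fun _ ht _ hst => ht.mono hst) fun _ hs _ ht => hs.union ht

theorem coThin_neBot (h : ¬ IsTame c) : (coThin c).NeBot := by
  refine forall_mem_nonempty_iff_neBot.1 fun s hs => nonempty_iff_ne_empty.2 fun hs0 => h ?_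
  rw [hs0] at hs
  exact IsThin.isTame_of_univ (by simpa [coThin] using hs)

theorem exists_injOn_class (hself : ∀ x, x ∈ c x) (hc : ∀ {x y}, y ∈ c x → c y = c x)
    {S : Set α} {m : ℕ} (hS : ∀ x ∈ S, (c x).Finite ∧ (c x).ncard < m) :
    ∃ g : α → ℕ, ∀ x ∈ S, g x < m ∧ ∀ y ∈ c x, g y = g x → y = x := by
  let _ : LinearOrder α := IsWellOrder.linearOrder WellOrderingRel
  have hlt : ∀ {x y}, (c x).Finite → y ∈ c x → y < x →
      (c y ∩ Iio y).ncard < (c x ∩ Iio x).ncard := by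
    intro x y hfin hy hyx
    refine ncard_lt_ncard ?_ (hfin.subset inter_subset_left)
    rw [hc hy]
    refine (ssubset_iff_of_subset ?_).2 ⟨y, ⟨hy, hyx⟩, fun h => lt_irrefl y h.2⟩
    exact fun z hz => ⟨hz.1, hz.2.trans hyx⟩
  refine ⟨fun x => (c x ∩ Iio x).ncard, fun x hx => ⟨?_, fun y hy hxy => ?_⟩⟩
  · exact (ncard_le_ncard inter_subset_left (hS x hx).1).trans_lt (hS x hx).2
  · rcases lt_trichotomy y x with h | h | h
    · exact absurd hxy (hlt (hS x hx).1 hy h).ne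
    · exact h
    · have hfin : (c y).Finite := by rw [hc hy]; exact (hS x hx).1
      exact absurd hxy (hlt hfin (by rw [hc hy]; exact hself x) h).ne'

theorem Ultrafilter.exists_mem_transversal (𝒰 : Ultrafilter α) (hself : ∀ x, x ∈ c x)
    (hc : ∀ {x y}, y ∈ c x → c y = c x) (htame : IsTame c) (hnot : ∀ x, c x ∉ 𝒰) :
    ∃ U ∈ 𝒰, ∀ x ∈ U, ∀ y ∈ U, y ∈ c x → y = x := by
  obtain ⟨hinf, m, hm⟩ := htame
  set W := ⋃₀ {C | (∃ x, C = c x) ∧ C.Infinite}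
  have hW : Wᶜ ∈ 𝒰 := by
    refine compl_mem_iff_notMem.2 fun hW => ?_
    obtain ⟨_, ⟨⟨x, rfl⟩, -⟩, hx⟩ := (finite_sUnion_mem_iff hinf).1 hW
    exact hnot x hx
  have hfin : ∀ x ∈ Wᶜ, (c x).Finite := fun x hx =>
    not_infinite.1 fun h => hx (mem_sUnion_of_mem (hself x) ⟨⟨x, rfl⟩, h⟩)
  obtain ⟨g, hg⟩ := exists_injOn_class hself hc fun x hx => ⟨hfin x hx, hm _ ⟨x, rfl⟩ (hfin x hx)⟩
  have hcover : Wᶜ ⊆ ⋃ t ∈ Iio m, Wᶜ ∩ g ⁻¹' {t} := fun x hx =>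
    mem_biUnion (hg x hx).1 ⟨hx, rfl⟩
  obtain ⟨t, -, ht⟩ := (finite_biUnion_mem_iff (finite_Iio m)).1 (mem_of_superset hW hcover)
  exact ⟨_, ht, fun x hx y hy hyx => (hg x hx.1).2 y hyx (hy.2.trans hx.2.symm)⟩

end Partition

section Ultrametric

variable {X : Type*} [MetricSpace X]

theorem mem_ballClass_self {R : ℝ} (hR : 0 ≤ R) (x : X) : x ∈ ballClass R x := by
  simpa [ballClass] using hR

theorem ballClass_eq_closedBall (R : ℝ) (x : X) : ballClass R x = Metric.closedBall x R := by
  ext y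
  simp [ballClass, dist_comm]

theorem monochromeOn_of_dist_eq {χ : X → X → Bool} (hχ : IsIsometricColoring χ) {U : Set X}
    {d : ℝ} (hU : ∀ x ∈ U, ∀ y ∈ U, x ≠ y → dist x y = d) : MonochromeOn χ U := by
  by_cases h : ∃ a ∈ U, ∃ b ∈ U, a ≠ b
  · obtain ⟨a, ha, b, hb, hab⟩ := h
    exact ⟨χ a b, fun x hx y hy hxy => hχ x y a b (by rw [hU x hx y hy hxy, hU a ha b hb hab])⟩
  · exact ⟨true, fun x hx y hy hxy => absurd ⟨x, hx, y, hy, hxy⟩ h⟩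

variable [IsUltrametricDist X]

theorem ballClass_eq_of_mem {R : ℝ} {x y : X} (h : y ∈ ballClass R x) :
    ballClass R y = ballClass R x := by
  rw [ballClass_eq_closedBall] at h ⊢
  rw [ballClass_eq_closedBall]
  exact (IsUltrametricDist.closedBall_eq_of_mem h).symm

theorem dist_le_of_mem_ballClass {R : ℝ} {x y z : X} (hy : y ∈ ballClass R x)
    (hz : z ∈ ballClass R x) : dist y z ≤ R := by
  rwa [← ballClass_eq_of_mem hy] at hz

theorem exists_free_not_metricallyRamsey {R : ℝ} (hR : 0 ≤ R)
    (h : ¬ IsTame (ballClass (X := X) R)) :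
    ∃ 𝒰 : Ultrafilter X, IsFreeUltrafilter 𝒰 ∧ ¬ MetricallyRamsey 𝒰 := by
  have hc : ∀ {x y : X}, y ∈ ballClass R x → ballClass R y = ballClass R x := ballClass_eq_of_mem
  have := coThin_neBot h
  set 𝒰 := Ultrafilter.of (coThin (ballClass (X := X) R))
  have hthin : ∀ {A}, IsThin (ballClass R) A → A ∉ 𝒰 := fun hA hA𝒰 =>
    𝒰.compl_notMem_iff.2 hA𝒰 (Ultrafilter.of_le _ (mem_comk.2 (by rwa [compl_compl])))
  refine ⟨𝒰, fun x hx => hthin (finite_singleton x).isThin (by simp [hx]), fun hRamsey => ?_⟩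
  obtain ⟨U, hU, b, hb⟩ :=
    hRamsey (fun x y => decide (dist x y ≤ R)) fun x y z t h => by simp only [h]
  refine hthin ?_ hU
  cases b
  · refine isThin_of_transversal hc fun x hx y hy hxy => by_contra fun hne => ?_
    simpa [show dist x y ≤ R from hxy] using hb x hx y hy (Ne.symm hne)
  · obtain ⟨a, ha⟩ := 𝒰.nonempty_of_mem hU
    refine (isThin_class hc a).mono fun y hy => ?_
    rcases eq_or_ne a y with rfl | hay
    · exact mem_ballClass_self hR a
    · exact (of_decide_eq_true (hb a ha y hy hay) : dist a y ≤ R)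

theorem Ultrafilter.exists_mem_forall_dist_eq {ι : Type*} [Finite ι] (r : ι → ℝ)
    (hr : ∀ i, 0 ≤ r i) (hscale : ∀ x y : X, x ≠ y → ∃ i, dist x y = r i)
    (htame : ∀ i, IsTame (ballClass (X := X) (r i))) (𝒰 : Ultrafilter X) :
    ∃ U ∈ 𝒰, ∃ d : ℝ, ∀ x ∈ U, ∀ y ∈ U, x ≠ y → dist x y = d := by
  set S := {i | ∃ x, ballClass (r i) x ∈ 𝒰}
  have hsep : ∀ j ∉ S, ∃ U ∈ 𝒰, ∀ x ∈ U, ∀ y ∈ U, x ≠ y → r j < dist x y := by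
    intro j hj
    obtain ⟨U, hU, htr⟩ := 𝒰.exists_mem_transversal (mem_ballClass_self (hr j))
      ballClass_eq_of_mem (htame j) fun x hx => hj ⟨x, hx⟩
    exact ⟨U, hU, fun x hx y hy hxy => lt_of_not_ge fun h => hxy (htr x hx y hy h).symm⟩
  choose! U hU𝒰 hU using hsep
  have hV : (⋂ j ∈ Sᶜ, U j) ∈ 𝒰 := (biInter_mem Sᶜ.toFinite).2 hU𝒰
  have hVS : ∀ x ∈ ⋂ j ∈ Sᶜ, U j, ∀ y ∈ ⋂ j ∈ Sᶜ, U j, x ≠ y → ∃ i ∈ S, dist x y = r i := by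
    intro x hx y hy hxy
    obtain ⟨i, hi⟩ := hscale x y hxy
    refine ⟨i, by_contra fun hiS => ?_, hi⟩
    have := hU i hiS x (mem_iInter₂.1 hx i hiS) y (mem_iInter₂.1 hy i hiS) hxy
    linarith
  rcases S.eq_empty_or_nonempty with hS | hS
  · refine ⟨_, hV, 0, fun x hx y hy hxy => ?_⟩
    obtain ⟨i, hi, -⟩ := hVS x hx y hy hxy
    simp [hS] at hi
  · obtain ⟨i, ⟨x₀, hC⟩, hmin⟩ := S.exists_min_image r S.toFinite hS
    refine ⟨_, inter_mem hV hC, r i, fun x hx y hy hxy => ?_⟩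
    obtain ⟨k, hkS, hk⟩ := hVS x hx.1 y hy.1 hxy
    exact le_antisymm (dist_le_of_mem_ballClass hx.2 hy.2) (hk ▸ hmin k hkS)

end Ultrametric

theorem stmt13_general {X : Type*} [MetricSpace X]
    (hultra : ∀ x y z : X, dist x z ≤ max (dist x y) (dist y z))
    (n : ℕ) (r : Fin n → ℝ) (hpos : ∀ i, 0 < r i)
    (hscale : (Set.range fun p : X × X => dist p.1 p.2) =
      insert 0 (Set.range r)) :
    (∀ 𝒰 : Ultrafilter X, IsFreeUltrafilter 𝒰 → MetricallyRamsey 𝒰) ↔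
      ∀ i : Fin n,
        {C : Set X | (∃ x : X, C = ballClass (r i) x) ∧ C.Infinite}.Finite ∧
        ∃ m : ℕ, ∀ C : Set X, (∃ x : X, C = ballClass (r i) x) → C.Finite →
          C.ncard < m := by
  have : IsUltrametricDist X := ⟨hultra⟩
  constructor
  · intro hRamsey i
    by_contra htame
    obtain ⟨𝒰, hfree, hnot⟩ := exists_free_not_metricallyRamsey (hpos i).le htame
    exact hnot (hRamsey 𝒰 hfree)
  · intro htame 𝒰 _ χ hχ
    have hscale' : ∀ x y : X, x ≠ y → ∃ i, dist x y = r i := by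
      intro x y hxy
      have : dist x y ∈ insert 0 (Set.range r) := hscale ▸ ⟨(x, y), rfl⟩
      rcases this with h | ⟨i, hi⟩
      · exact absurd (dist_eq_zero.1 h) hxy
      · exact ⟨i, hi.symm⟩
    obtain ⟨U, hU, d, hd⟩ := 𝒰.exists_mem_forall_dist_eq r (fun i => (hpos i).le) hscale' htame
    exact ⟨U, hU, monochromeOn_of_dist_eq hχ hd⟩

/-- Proposition 2.3: for an infinite ultrametric space with finite scale
`{0, r 0, …, r (n-1)}`, `0 < r 0 < … < r (n-1)`, every free ultrafilter is
metrically Ramsey iff for each `i` the partition into classes of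
`r i`-equivalence has only finitely many infinite classes and the finite
classes have uniformly bounded size. -/
theorem stmt13 {X : Type*} [MetricSpace X] [Infinite X]
    (hultra : ∀ x y z : X, dist x z ≤ max (dist x y) (dist y z))
    (n : ℕ) (r : Fin n → ℝ) (hmono : StrictMono r) (hpos : ∀ i, 0 < r i)
    (hscale : (Set.range fun p : X × X => dist p.1 p.2) =
      insert 0 (Set.range r)) :
    (∀ 𝒰 : Ultrafilter X, IsFreeUltrafilter 𝒰 → MetricallyRamsey 𝒰) ↔
      ∀ i : Fin n,
        {C : Set X | (∃ x : X, C = ballClass (r i) x) ∧ C.Infinite}.Finite ∧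
        ∃ m : ℕ, ∀ C : Set X, (∃ x : X, C = ballClass (r i) x) → C.Finite →
          C.ncard < m :=
  stmt13_general hultra n r hpos hscale
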